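/- If every derivation of an almost Abelian Lie algebra L is inner (i.e., Der(L) = ad_L), then L is isomorphic to the 2-dimensional non-Abelian Lie algebra ax+b. -/

import Mathlib

variable {F : Type*} [Field F] {V : Type*} [AddCommGroup V] [Module F V]

/-- The almost Abelian Lie algebra `F e₀ ⋉ V` determined by the operator `T = ad_{e₀}|_V`:
the underlying vector space is `F × V`, with bracket `[(t,v),(s,w)] = (0, t • T w - s • T v)`. -/
def AA (F V : Type*) [Field F] [AddCommGroup V] [Module F V] (_T : Module.End F V) : Type _ :=
  F × V

namespace AA

variable {T : Module.End F V}

instance : AddCommGroup (AA F V T) := inferInstanceAs (AddCommGroup (F × V))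
instance : Module F (AA F V T) := inferInstanceAs (Module F (F × V))

instance : LieRing (AA F V T) where
  bracket := fun (x y : F × V) => (((0 : F), x.1 • T y.2 - y.1 • T x.2) : F × V)
  add_lie := by
    rintro ⟨a, u⟩ ⟨b, v⟩ ⟨c, w⟩
    show (((0 : F), (a + b) • T w - c • T (u + v)) : F × V)
      = (((0 : F), a • T w - c • T u) : F × V) + (((0 : F), b • T w - c • T v) : F × V)
    ext
    · simp
    · show (a + b) • T w - c • T (u + v) = (a • T w - c • T u) + (b • T w - c • T v)
      simp only [map_add, smul_add, add_smul]
      module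
  lie_add := by
    rintro ⟨a, u⟩ ⟨b, v⟩ ⟨c, w⟩
    show (((0 : F), a • T (v + w) - (b + c) • T u) : F × V)
      = (((0 : F), a • T v - b • T u) : F × V) + (((0 : F), a • T w - c • T u) : F × V)
    ext
    · simp
    · show a • T (v + w) - (b + c) • T u = (a • T v - b • T u) + (a • T w - c • T u)
      simp only [map_add, smul_add, add_smul]
      module
  lie_self := by
    rintro ⟨a, u⟩
    show (((0 : F), a • T u - a • T u) : F × V) = (0 : F × V)
    ext
    · simp
    · show a • T u - a • T u = (0 : V)
      simp
  leibniz_lie := by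
    rintro ⟨a, u⟩ ⟨b, v⟩ ⟨c, w⟩
    show (((0 : F), a • T (b • T w - c • T v) - (0 : F) • T u) : F × V)
      = (((0 : F), (0 : F) • T w - c • T (a • T v - b • T u)) : F × V)
        + (((0 : F), b • T (a • T w - c • T u) - (0 : F) • T v) : F × V)
    ext
    · simp
    · show a • T (b • T w - c • T v) - (0 : F) • T u
        = ((0 : F) • T w - c • T (a • T v - b • T u)) + (b • T (a • T w - c • T u) - (0 : F) • T v)
      simp only [map_sub, map_smul, zero_smul, smul_sub, smul_smul]
      module

instance : LieAlgebra F (AA F V T) where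
  lie_smul := by
    rintro r ⟨a, u⟩ ⟨b, v⟩
    show (((0 : F), a • T (r • v) - (r • b) • T u) : F × V)
      = r • (((0 : F), a • T v - b • T u) : F × V)
    ext
    · simp
    · show a • T (r • v) - (r • b) • T u = r • (a • T v - b • T u)
      simp only [map_smul, smul_sub, smul_smul, smul_eq_mul]
      module

/-- The distinguished element `e₀`. -/
def e0 (T : Module.End F V) : AA F V T := ((1, 0) : F × V)

/-- The inclusion of the Abelian ideal `V` into `F e₀ ⋉ V`. -/
def incl (T : Module.End F V) : V →ₗ[F] AA F V T where
  toFun v := ((0, v) : F × V)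
  map_add' u v := by
    show (((0 : F), u + v) : F × V) = (((0 : F), u) : F × V) + (((0 : F), v) : F × V)
    ext <;> simp
  map_smul' r v := by
    show (((0 : F), r • v) : F × V) = r • (((0 : F), v) : F × V)
    ext <;> simp

@[simp] lemma bracket_e0_incl (v : V) : ⁅e0 T, incl T v⁆ = incl T (T v) := by
  show (((0 : F), (1 : F) • T v - (0 : F) • T (0 : V)) : F × V) = (((0 : F), T v) : F × V)
  ext <;> simp

end AA


/-- A Lie algebra is almost Abelian if it is non-Abelian and possesses an Abelian ideal of
codimension 1 (as an `F`-vector subspace). -/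
def IsAlmostAbelian (F L : Type*) [Field F] [LieRing L] [LieAlgebra F L] : Prop :=
  ¬IsLieAbelian L ∧
    ∃ I : LieIdeal F L, IsLieAbelian I ∧ Module.rank F (L ⧸ I.toSubmodule) = 1

/-- The 2-dimensional non-Abelian Lie algebra `ax+b`, with `[e₀, e₁] = e₁`. -/
abbrev axb (F : Type*) [Field F] : Type _ := AA F F (1 : Module.End F F)

/-!
Write `L = F x₀ ⋉ I` with `I` the Abelian ideal and `T = ad x₀` restricted to `I`. An
endomorphism `S` of `I` commuting with `T` extends, by `x₀ ↦ 0`, to a derivation of `L`. If this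
derivation is `ad z` with `z = c x₀ + u`, `u ∈ I`, evaluating it at `x₀` gives `T u = 0`, and then
`S = c T`. For `S = 1` this makes `T` a nonzero scalar, so every endomorphism of `I` commutes with
`T` and is itself scalar, which forces `dim I = 1`. Rescaling `x₀` turns `T` into the identity.
-/

namespace AA

variable {T : Module.End F V}

def fst : AA F V T →ₗ[F] F := LinearMap.fst F F V

def snd : AA F V T →ₗ[F] V := LinearMap.snd F F V

def mk (t : F) (v : V) : AA F V T := (t, v)

@[simp] lemma fst_mk (t : F) (v : V) : fst (mk t v : AA F V T) = t := rfl

@[simp] lemma snd_mk (t : F) (v : V) : snd (mk t v : AA F V T) = v := rfl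

@[simp] lemma fst_e0 : fst (e0 T) = 1 := rfl

@[simp] lemma snd_e0 : snd (e0 T) = 0 := rfl

@[simp] lemma fst_incl (v : V) : fst (incl T v) = 0 := rfl

@[simp] lemma snd_incl (v : V) : snd (incl T v) = v := rfl

@[ext] lemma ext {x y : AA F V T} (h₁ : fst x = fst y) (h₂ : snd x = snd y) : x = y :=
  Prod.ext h₁ h₂

lemma incl_injective : Function.Injective (incl T) := fun _ _ h => congrArg snd h

lemma lie_eq (x y : AA F V T) : ⁅x, y⁆ = incl T (fst x • T (snd y) - fst y • T (snd x)) := rfl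

lemma isLieAbelian_of_eq_zero (hT : T = 0) : IsLieAbelian (AA F V T) :=
  ⟨fun x y => by simp [lie_eq, hT]⟩

def lieEquivOfSemiconj {V' : Type*} [AddCommGroup V'] [Module F V'] {T' : Module.End F V'}
    (a : F) (ha : a ≠ 0) (e : V ≃ₗ[F] V') (h : ∀ v, e (T v) = a • T' (e v)) :
    AA F V T ≃ₗ⁅F⁆ AA F V' T' :=
  { (LinearEquiv.smulOfNeZero F F a ha).prodCongr e with
    map_lie' := fun {x y} => by
      change mk (a • fst ⁅x, y⁆) (e (snd ⁅x, y⁆))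
        = ⁅(mk (a • fst x) (e (snd x)) : AA F V' T'), mk (a • fst y) (e (snd y))⁆
      ext <;> simp [lie_eq, h, smul_smul, mul_comm] }

def derivationOfCommute (S : Module.End F V) (hS : Commute S T) :
    LieDerivation F (AA F V T) (AA F V T) where
  toLinearMap := incl T ∘ₗ S ∘ₗ snd
  leibniz' x y := by
    have hST : ∀ v, S (T v) = T (S v) := fun v => LinearMap.congr_fun hS.eq v
    simp [lie_eq, hST]

@[simp] lemma derivationOfCommute_apply (S : Module.End F V) (hS : Commute S T) (x : AA F V T) :
    derivationOfCommute S hS x = incl T (S (snd x)) := rfl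

lemma exists_eq_smul_of_commute (had : Function.Surjective (LieDerivation.ad F (AA F V T)))
    {S : Module.End F V} (hS : Commute S T) : ∃ c : F, S = c • T := by
  obtain ⟨z, hz⟩ := had (derivationOfCommute S hS)
  have hD : ∀ x, incl T (S (snd x)) = ⁅z, x⁆ := fun x => by
    simpa using congr($hz x).symm
  have hz₀ : T (snd z) = 0 := by
    simpa [lie_eq, map_eq_zero_iff _ incl_injective] using hD (e0 T)
  refine ⟨fst z, LinearMap.ext fun v => incl_injective (T := T) ?_⟩
  simpa [lie_eq, hz₀] using hD (incl T v)

section AbelianIdeal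

open LieModule

variable {L : Type*} [LieRing L] [LieAlgebra F L]

def lieHomOfAbelianIdeal (I : LieIdeal F L) (hI : IsLieAbelian I) (x₀ : L) :
    AA F I (toEnd F L I x₀) →ₗ⁅F⁆ L where
  toFun x := fst x • x₀ + snd x
  map_add' x y := by simp only [map_add, add_smul, LieSubmodule.coe_add]; abel
  map_smul' c x := by simp [smul_add, smul_smul]
  map_lie' {x y} := by
    have hIv : ∀ v w : I, ⁅(v : L), (w : L)⁆ = 0 := fun v w =>
      congrArg Subtype.val (trivial_lie_zero I I v w)
    simp [lie_eq, add_lie, lie_add, smul_lie, lie_smul, hIv]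
    rw [← lie_skew ((snd x : I) : L) x₀]
    module

@[simp] lemma lieHomOfAbelianIdeal_apply (I : LieIdeal F L) (hI : IsLieAbelian I) (x₀ : L)
    (x : AA F I (toEnd F L I x₀)) : lieHomOfAbelianIdeal I hI x₀ x = fst x • x₀ + snd x := rfl

lemma bijective_lieHomOfAbelianIdeal {I : LieIdeal F L} (hI : IsLieAbelian I) {x₀ : L}
    (hx₀ : x₀ ∉ I) (hspan : ∀ y : L, ∃ t : F, y - t • x₀ ∈ I) :
    Function.Bijective (lieHomOfAbelianIdeal I hI x₀) := by
  refine ⟨(injective_iff_map_eq_zero _).2 fun x hx => ?_, fun y => ?_⟩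
  · rw [lieHomOfAbelianIdeal_apply] at hx
    have ht : fst x = 0 := by
      by_contra ht
      refine hx₀ ((I.toSubmodule.smul_mem_iff ht).1 ?_)
      rw [eq_neg_of_add_eq_zero_left hx]
      exact neg_mem (snd x).2
    rw [ht, zero_smul, zero_add, ZeroMemClass.coe_eq_zero] at hx
    exact ext ht hx
  · obtain ⟨t, ht⟩ := hspan y
    exact ⟨mk t ⟨y - t • x₀, ht⟩, by simp⟩

end AbelianIdeal

end AA

open LieModule in
theorem IsAlmostAbelian.exists_lieEquiv {L : Type*} [LieRing L] [LieAlgebra F L]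
    (hL : IsAlmostAbelian F L) :
    ∃ (I : LieIdeal F L) (x₀ : L),
      toEnd F L I x₀ ≠ 0 ∧ Nonempty (AA F I (toEnd F L I x₀) ≃ₗ⁅F⁆ L) := by
  obtain ⟨hnab, I, hI, hrank⟩ := hL
  obtain ⟨q₀, hq₀, hspan⟩ := rank_eq_one_iff.1 hrank
  obtain ⟨x₀, rfl⟩ := Submodule.mkQ_surjective _ q₀
  have hx₀ : x₀ ∉ I := by simpa using hq₀
  have hspan' : ∀ y : L, ∃ t : F, y - t • x₀ ∈ I := fun y => by
    obtain ⟨t, ht⟩ := hspan (Submodule.mkQ _ y)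
    refine ⟨t, (Submodule.Quotient.eq _).1 ?_⟩
    rw [← Submodule.mkQ_apply, ← ht]
    rfl
  let e := LieEquiv.ofBijective _ (AA.bijective_lieHomOfAbelianIdeal hI hx₀ hspan')
  exact ⟨I, x₀, fun hT => hnab ((lie_abelian_iff_equiv_lie_abelian e).1
    (AA.isLieAbelian_of_eq_zero hT)), ⟨e⟩⟩

lemma LieDerivation.surjective_ad_of_lieEquiv {R L L' : Type*} [CommRing R] [LieRing L]
    [LieAlgebra R L] [LieRing L'] [LieAlgebra R L'] (e : L ≃ₗ⁅R⁆ L')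
    (had : Function.Surjective (ad R L)) : Function.Surjective (ad R L') := by
  intro D'
  let D : LieDerivation R L L :=
    { toLinearMap := (e.symm.toLinearEquiv : L' →ₗ[R] L) ∘ₗ (D' : L' →ₗ[R] L') ∘ₗ
        (e.toLinearEquiv : L →ₗ[R] L')
      leibniz' := fun a b => by
        change e.symm (D' (e ⁅a, b⁆)) = ⁅a, e.symm (D' (e b))⁆ - ⁅b, e.symm (D' (e a))⁆
        rw [e.map_lie, D'.apply_lie_eq_sub, map_sub, e.symm.map_lie, e.symm.map_lie,
          e.symm_apply_apply, e.symm_apply_apply] }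
  have hD : ∀ z, D z = e.symm (D' (e z)) := fun _ => rfl
  obtain ⟨x, hx⟩ := had D
  refine ⟨e x, LieDerivation.ext fun y => ?_⟩
  have hxy : ⁅x, e.symm y⁆ = D (e.symm y) := by rw [← hx]; simp
  calc ad R L' (e x) y = e ⁅x, e.symm y⁆ := by simp [e.map_lie]
    _ = D' y := by rw [hxy, hD, e.apply_symm_apply, e.apply_symm_apply]

namespace Module.End

lemma exists_ne_zero_eq_smul_one_of_forall_commute {T : Module.End F V} (hT : T ≠ 0)
    (h : ∀ S : Module.End F V, Commute S T → ∃ c : F, S = c • T) :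
    ∃ a : F, a ≠ 0 ∧ T = a • 1 := by
  obtain ⟨c, hc⟩ := h 1 (Commute.one_left T)
  have hc₀ : c ≠ 0 := by
    rintro rfl
    rw [zero_smul] at hc
    exact hT (by rw [← mul_one T, hc, mul_zero])
  exact ⟨c⁻¹, inv_ne_zero hc₀, by rw [hc, smul_smul, inv_mul_cancel₀ hc₀, one_smul]⟩

lemma rank_eq_one_of_forall_eq_smul_one [Nontrivial V]
    (h : ∀ S : Module.End F V, ∃ c : F, S = c • 1) : Module.rank F V = 1 := by
  obtain ⟨v₀, hv₀⟩ := exists_ne (0 : V)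
  obtain ⟨f, hf⟩ := Module.Projective.exists_dual_eq_one F hv₀
  refine rank_eq_one_iff.2 ⟨v₀, hv₀, fun w => ?_⟩
  obtain ⟨c, hc⟩ := h (f.smulRight w)
  exact ⟨c, by simpa [hf] using (LinearMap.congr_fun hc v₀).symm⟩

end Module.End

/-- If every derivation of an almost Abelian Lie algebra `L` is inner then `L` is isomorphic to
the 2-dimensional non-Abelian Lie algebra `ax+b`. -/
theorem stmt18 (F L : Type*) [Field F] [LieRing L] [LieAlgebra F L]
    (hL : IsAlmostAbelian F L)
    (hder : ∀ D : LieDerivation F L L, ∃ x : L, D = LieDerivation.ad F L x) :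
    Nonempty (L ≃ₗ⁅F⁆ axb F) := by
  obtain ⟨I, x₀, hT, ⟨e⟩⟩ := hL.exists_lieEquiv
  set T := LieModule.toEnd F L I x₀
  have had : Function.Surjective (LieDerivation.ad F (AA F I T)) :=
    LieDerivation.surjective_ad_of_lieEquiv e.symm fun D => (hder D).imp fun _ => Eq.symm
  obtain ⟨a, ha, hTa⟩ := Module.End.exists_ne_zero_eq_smul_one_of_forall_commute hT
    fun _ => AA.exists_eq_smul_of_commute had
  have : Nontrivial I := not_subsingleton_iff_nontrivial.1 fun _ => hT (Subsingleton.elim _ _)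
  have hrank : Module.rank F I = 1 := by
    refine Module.End.rank_eq_one_of_forall_eq_smul_one fun S => ?_
    have hST : Commute S T := by rw [hTa]; exact (Commute.one_right S).smul_right a
    obtain ⟨c, hc⟩ := AA.exists_eq_smul_of_commute had hST
    exact ⟨c * a, by rw [hc, hTa, smul_smul]⟩
  obtain ⟨φ⟩ : Nonempty (I ≃ₗ[F] F) := nonempty_linearEquiv_of_lift_rank_eq (by simp [hrank])
  exact ⟨e.symm.trans (AA.lieEquivOfSemiconj a ha φ fun v => by simp [hTa])⟩
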